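/- For p ∈ (1,2), an analytic function f on D belongs to the Campanato space CA_p (i.e., ‖f‖_{CA_p,*} = sup_{a∈D} (1-|a|^2)^{(1-p)/2} ‖f∘σ_a − f(a)‖_2 < ∞) if and only if sup_{a∈D} (1-|a|^2)^{(3-p)/2} |f'(a)| < ∞, i.e., f lies in the analytic Lipschitz space A_{(p-1)/2}. -/

import Mathlib

/-- The Möbius involution `σ_a(z) = (a - z)/(1 - conj(a) z)` of the unit disk. -/
noncomputable def mSigma (a z : ℂ) : ℂ := (a - z) / (1 - (starRingEnd ℂ) a * z)

/-- The squared boundary `L²` norm `∫_T ‖f(ξ)‖² |dξ|` over the unit circle. -/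
noncomputable def bnormSq (f : ℂ → ℂ) : ℝ :=
  ∫ θ in (0:ℝ)..(2 * Real.pi), ‖f (Complex.exp (θ * Complex.I))‖ ^ 2

/-!
Both directions go through `f ∘ σ_a`, whose derivative at `0` is `(‖a‖² - 1) f'(a)` and whose
boundary values satisfy `‖σ_a ξ - a‖ = (1 - ‖a‖²) / ‖1 - conj a ξ‖`.

If the Campanato quantity is bounded, Cauchy's estimate bounds `(1 - ‖a‖²) ‖f'(a)‖` by the
boundary `L¹` norm of `f ∘ σ_a - f(a)`, hence by its `L²` norm, which is
`O((1 - ‖a‖²)^((p - 1)/2))`.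

Conversely, with `β = (p - 1)/2` the growth bound `‖f'(z)‖ ≤ M (1 - ‖z‖)^(β - 1)` makes `f`
`β`-Hölder on the closed disc (Hardy–Littlewood), so that
`‖f(σ_a ξ) - f(a)‖² ≤ C² (1 - ‖a‖²)^(2β) ‖1 - conj a ξ‖^(-2β)`. Since `2β < 1` and
`‖1 - r e^{iψ}‖ ≥ |ψ| / π`, the integral of `‖1 - c ξ‖^(-2β)` over the circle is bounded
uniformly in `‖c‖ < 1`.
-/

open Metric Set MeasureTheory ComplexConjugate

section Moebius

variable {a z : ℂ}

lemma norm_conj_mul_lt_one (ha : ‖a‖ < 1) (hz : ‖z‖ ≤ 1) : ‖conj a * z‖ < 1 := by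
  rw [norm_mul, RCLike.norm_conj]
  exact mul_lt_one_of_nonneg_of_lt_one_left (norm_nonneg a) ha hz

lemma one_sub_conj_mul_ne_zero (ha : ‖a‖ < 1) (hz : ‖z‖ ≤ 1) : 1 - conj a * z ≠ 0 := fun h => by
  simpa [← sub_eq_zero.1 h] using norm_conj_mul_lt_one ha hz

lemma normSq_one_sub_conj_mul_sub_normSq_sub (a z : ℂ) :
    Complex.normSq (1 - conj a * z) - Complex.normSq (a - z) =
      (1 - Complex.normSq a) * (1 - Complex.normSq z) := by
  simp only [Complex.normSq_apply, Complex.sub_re, Complex.sub_im, Complex.mul_re,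
    Complex.mul_im, Complex.one_re, Complex.one_im, Complex.conj_re, Complex.conj_im]
  ring

lemma norm_mSigma_le_one (ha : ‖a‖ < 1) (hz : ‖z‖ ≤ 1) : ‖mSigma a z‖ ≤ 1 := by
  rw [mSigma, norm_div, div_le_one (norm_pos_iff.2 (one_sub_conj_mul_ne_zero ha hz)),
    ← sq_le_sq₀ (norm_nonneg _) (norm_nonneg _), ← Complex.normSq_eq_norm_sq,
    ← Complex.normSq_eq_norm_sq, ← sub_nonneg, normSq_one_sub_conj_mul_sub_normSq_sub,
    Complex.normSq_eq_norm_sq, Complex.normSq_eq_norm_sq]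
  apply mul_nonneg <;> nlinarith [norm_nonneg a, norm_nonneg z]

lemma norm_mSigma_lt_one (ha : ‖a‖ < 1) (hz : ‖z‖ < 1) : ‖mSigma a z‖ < 1 := by
  rw [mSigma, norm_div, div_lt_one (norm_pos_iff.2 (one_sub_conj_mul_ne_zero ha hz.le)),
    ← sq_lt_sq₀ (norm_nonneg _) (norm_nonneg _), ← Complex.normSq_eq_norm_sq,
    ← Complex.normSq_eq_norm_sq, ← sub_pos, normSq_one_sub_conj_mul_sub_normSq_sub,
    Complex.normSq_eq_norm_sq, Complex.normSq_eq_norm_sq]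
  apply mul_pos <;> nlinarith [norm_nonneg a, norm_nonneg z]

@[simp]
lemma mSigma_zero (a : ℂ) : mSigma a 0 = a := by simp [mSigma]

lemma mSigma_sub_self (h : 1 - conj a * z ≠ 0) :
    mSigma a z - a = ((‖a‖ ^ 2 - 1 : ℝ) : ℂ) * z / (1 - conj a * z) := by
  rw [mSigma, div_sub' h, Complex.ofReal_sub, Complex.ofReal_pow, ← Complex.mul_conj',
    Complex.ofReal_one]
  ring

lemma norm_ofReal_norm_sq_sub_one (ha : ‖a‖ < 1) : ‖((‖a‖ ^ 2 - 1 : ℝ) : ℂ)‖ = 1 - ‖a‖ ^ 2 := by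
  rw [Complex.norm_real, Real.norm_eq_abs, abs_of_nonpos (by nlinarith [norm_nonneg a]), neg_sub]

lemma norm_mSigma_sub_self (ha : ‖a‖ < 1) (hz : ‖z‖ = 1) :
    ‖mSigma a z - a‖ = (1 - ‖a‖ ^ 2) / ‖1 - conj a * z‖ := by
  rw [mSigma_sub_self (one_sub_conj_mul_ne_zero ha hz.le), norm_div, norm_mul, hz, mul_one,
    norm_ofReal_norm_sq_sub_one ha]

lemma hasDerivAt_mSigma_zero (a : ℂ) : HasDerivAt (mSigma a) ((‖a‖ ^ 2 - 1 : ℝ) : ℂ) 0 := by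
  have h : HasDerivAt (fun z => (a - z) / (1 - conj a * z)) (-1 + a * conj a) 0 := by
    simpa using ((hasDerivAt_id' (0:ℂ)).const_sub a).fun_div
      (((hasDerivAt_id' (0:ℂ)).const_mul (conj a)).const_sub 1) (by simp)
  rwa [Complex.mul_conj', ← Complex.ofReal_pow, neg_add_eq_sub, ← Complex.ofReal_one,
    ← Complex.ofReal_sub] at h

lemma differentiableOn_mSigma (ha : ‖a‖ < 1) : DifferentiableOn ℂ (mSigma a) (closedBall 0 1) :=
  fun _ hz => ((differentiableAt_const a).sub differentiableAt_id).div
    ((differentiableAt_const 1).sub (differentiableAt_id.const_mul _))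
    (one_sub_conj_mul_ne_zero ha (mem_closedBall_zero_iff.1 hz)) |>.differentiableWithinAt

lemma DiffContOnCl.comp_mSigma {f : ℂ → ℂ} (hf : DiffContOnCl ℂ f (ball 0 1)) (ha : ‖a‖ < 1) :
    DiffContOnCl ℂ (f ∘ mSigma a) (ball 0 1) :=
  hf.comp ((differentiableOn_mSigma ha).diffContOnCl_ball subset_rfl) fun _ hz =>
    mem_ball_zero_iff.2 (norm_mSigma_lt_one ha (mem_ball_zero_iff.1 hz))

end Moebius

open Real in
lemma norm_deriv_le_integral_norm_sub_circleMap {E : Type*} [NormedAddCommGroup E]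
    [NormedSpace ℂ E] [CompleteSpace E] {g : ℂ → E} {c : ℂ} {R : ℝ} (hR : 0 < R)
    (hg : DiffContOnCl ℂ g (ball c R)) :
    ‖deriv g c‖ ≤ (2 * π * R)⁻¹ * ∫ θ in 0..2 * π, ‖g (circleMap c R θ) - g c‖ := by
  have hcauchy := (hg.sub_const (g c)).deriv_eq_smul_circleIntegral hR
  rw [deriv_sub_const] at hcauchy
  have hnorm : ‖∮ z in C(c, R), (1 / (z - c) ^ 2) • (g z - g c)‖ ≤
      R⁻¹ * ∫ θ in 0..2 * π, ‖g (circleMap c R θ) - g c‖ := by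
    refine (intervalIntegral.norm_integral_le_integral_norm Real.two_pi_pos.le).trans_eq ?_
    rw [← intervalIntegral.integral_const_mul]
    refine intervalIntegral.integral_congr fun θ _ => ?_
    simp [norm_smul, abs_of_pos hR, field]
  rw [hcauchy, norm_smul] at hnorm
  have h2pi : ‖(2 * π * Complex.I : ℂ)‖ = 2 * π := by simp [Real.pi_pos.le]
  rw [h2pi] at hnorm
  rw [mul_inv, mul_assoc, le_inv_mul_iff₀ Real.two_pi_pos]
  linarith

lemma intervalIntegral.integral_norm_le_mul_add_integral_norm_sq {E : Type*}
    [NormedAddCommGroup E] {h : ℝ → E} (hh : Continuous h) {a b ε : ℝ} (hab : a ≤ b)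
    (hε : 0 < ε) :
    ∫ θ in a..b, ‖h θ‖ ≤ (b - a) * ε / 2 + (2 * ε)⁻¹ * ∫ θ in a..b, ‖h θ‖ ^ 2 := by
  have hsq : Continuous fun θ => (2 * ε)⁻¹ * ‖h θ‖ ^ 2 := by fun_prop
  have hamgm : ∀ θ, ‖h θ‖ ≤ ε / 2 + (2 * ε)⁻¹ * ‖h θ‖ ^ 2 := fun θ => by
    have : ε / 2 + (2 * ε)⁻¹ * ‖h θ‖ ^ 2 - ‖h θ‖ = (2 * ε)⁻¹ * (‖h θ‖ - ε) ^ 2 := by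
      field_simp; ring
    nlinarith [(by positivity : 0 ≤ (2 * ε)⁻¹ * (‖h θ‖ - ε) ^ 2)]
  calc ∫ θ in a..b, ‖h θ‖
      ≤ ∫ θ in a..b, ε / 2 + (2 * ε)⁻¹ * ‖h θ‖ ^ 2 :=
        integral_mono hab (hh.norm.intervalIntegrable _ _)
          ((continuous_const.add hsq).intervalIntegrable _ _) hamgm
    _ = (b - a) * ε / 2 + (2 * ε)⁻¹ * ∫ θ in a..b, ‖h θ‖ ^ 2 := by
        rw [integral_add intervalIntegrable_const (hsq.intervalIntegrable _ _), integral_const,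
          integral_const_mul, smul_eq_mul]
        ring

section Kernel

open Real

lemma abs_sin_half_le_norm_one_sub_mul_exp {r : ℝ} (hr : 0 ≤ r) (ψ : ℝ) :
    |sin (ψ / 2)| ≤ ‖1 - r * Complex.exp (ψ * Complex.I)‖ := by
  rw [← sq_le_sq₀ (abs_nonneg _) (norm_nonneg _), sq_abs, ← Complex.normSq_eq_norm_sq]
  have hnormSq : Complex.normSq (1 - r * Complex.exp (ψ * Complex.I)) =
      (1 - r) ^ 2 + 4 * r * sin (ψ / 2) ^ 2 := by
    have hcos : cos ψ = 1 - 2 * sin (ψ / 2) ^ 2 := by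
      have h := cos_two_mul' (ψ / 2)
      rw [show 2 * (ψ / 2) = ψ by ring] at h
      linarith [sin_sq_add_cos_sq (ψ / 2)]
    simp only [Complex.normSq_apply, Complex.sub_re, Complex.sub_im, Complex.mul_re,
      Complex.mul_im, Complex.one_re, Complex.one_im, Complex.ofReal_re, Complex.ofReal_im,
      Complex.exp_ofReal_mul_I_re, Complex.exp_ofReal_mul_I_im]
    nlinarith [sin_sq_add_cos_sq ψ]
  have hs : sin (ψ / 2) ^ 2 ≤ 1 := sin_sq_le_one _
  rw [hnormSq]
  nlinarith [mul_nonneg (sub_nonneg.2 hs) (sq_nonneg (1 - r)),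
    mul_nonneg hr (sq_nonneg (sin (ψ / 2)))]

lemma abs_div_pi_le_norm_one_sub_mul_exp {r ψ : ℝ} (hr : 0 ≤ r) (hψ : |ψ| ≤ π) :
    |ψ| / π ≤ ‖1 - r * Complex.exp (ψ * Complex.I)‖ := by
  have hJordan := mul_abs_le_abs_sin (x := ψ / 2) (by rw [abs_div, abs_two]; linarith)
  rw [abs_div, abs_two] at hJordan
  calc |ψ| / π = 2 / π * (|ψ| / 2) := by field_simp
    _ ≤ _ := hJordan.trans (abs_sin_half_le_norm_one_sub_mul_exp hr ψ)

lemma intervalIntegrable_abs_rpow {r : ℝ} (hr : -1 < r) (a b : ℝ) :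
    IntervalIntegrable (fun x : ℝ => |x| ^ r) volume a b := by
  simpa [Complex.norm_cpow_real] using
    (intervalIntegral.intervalIntegrable_cpow' (r := (r : ℂ)) (a := a) (b := b)
      (by simpa using hr)).norm

/-- Rotation invariance of arc length: substitute `θ ↦ θ - arg c` and use `2π`-periodicity. -/
lemma integral_comp_mul_exp_eq {E : Type*} [NormedAddCommGroup E] [NormedSpace ℝ E]
    (F : ℂ → E) (c : ℂ) :
    ∫ θ in 0..2 * π, F (c * Complex.exp (θ * Complex.I)) =
      ∫ θ in -π..π, F (‖c‖ * Complex.exp (θ * Complex.I)) := by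
  have hrot : ∀ θ : ℝ, c * Complex.exp (θ * Complex.I) =
      ‖c‖ * Complex.exp (↑(θ + Complex.arg c) * Complex.I) := fun θ => by
    conv_lhs => rw [← Complex.norm_mul_exp_arg_mul_I c]
    rw [mul_assoc, ← Complex.exp_add]
    push_cast; ring_nf
  have hper : Function.Periodic (fun θ : ℝ => F (‖c‖ * Complex.exp (θ * Complex.I))) (2 * π) :=
    fun θ => by simp [add_mul, Complex.exp_add]
  simp only [hrot]
  rw [intervalIntegral.integral_comp_add_right (fun θ => F (‖c‖ * Complex.exp (θ * Complex.I))),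
    zero_add, add_comm (2 * π), hper.intervalIntegral_add_eq (Complex.arg c) (-π)]
  ring_nf

lemma integral_norm_one_sub_mul_exp_rpow_le {q : ℝ} (hq0 : 0 ≤ q) (hq1 : q < 1) {c : ℂ}
    (hc : ‖c‖ < 1) :
    ∫ θ in 0..2 * π, ‖1 - c * Complex.exp (θ * Complex.I)‖ ^ (-q) ≤
      π ^ q * ∫ θ in -π..π, |θ| ^ (-q) := by
  rw [integral_comp_mul_exp_eq (fun w => ‖1 - w‖ ^ (-q)), ← intervalIntegral.integral_const_mul]
  have hne : ∀ θ : ℝ, ‖1 - ‖c‖ * Complex.exp (θ * Complex.I)‖ ≠ 0 := fun θ => by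
    have h := norm_sub_norm_le (1 : ℂ) (‖c‖ * Complex.exp (θ * Complex.I))
    rw [norm_one, norm_mul, Complex.norm_exp_ofReal_mul_I, Complex.norm_real, norm_norm,
      mul_one] at h
    linarith
  refine intervalIntegral.integral_mono_ae_restrict (by linarith [pi_pos])
    (Continuous.intervalIntegrable ((continuous_const.sub (continuous_const.mul
      (by fun_prop))).norm.rpow_const fun θ => Or.inl (hne θ)) _ _)
    ((intervalIntegrable_abs_rpow (by linarith) _ _).const_mul _) ?_
  filter_upwards [ae_restrict_mem measurableSet_Icc,
    ae_restrict_of_ae (Measure.ae_ne volume (0 : ℝ))] with θ hθ hθ0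
  have hθπ : |θ| ≤ π := abs_le.2 hθ
  calc ‖1 - ‖c‖ * Complex.exp (θ * Complex.I)‖ ^ (-q) ≤ (|θ| / π) ^ (-q) :=
        rpow_le_rpow_of_nonpos (by positivity)
          (abs_div_pi_le_norm_one_sub_mul_exp (norm_nonneg c) hθπ) (by linarith)
    _ = π ^ q * |θ| ^ (-q) := by
        rw [div_rpow (abs_nonneg θ) pi_pos.le, rpow_neg pi_pos.le, div_inv_eq_mul, mul_comm]

end Kernel

section HardyLittlewood

variable {f : ℂ → ℂ} {β M : ℝ}

lemma norm_sub_le_of_norm_deriv_le_radial (hf : DifferentiableOn ℂ f (ball 0 1))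
    (hM : ∀ z ∈ ball (0 : ℂ) 1, ‖deriv f z‖ ≤ M * (1 - ‖z‖) ^ (β - 1)) (hβ : 0 < β)
    {u : ℂ} (hu : ‖u‖ = 1) {s t : ℝ} (hs : 0 ≤ s) (hst : s ≤ t) (ht : t < 1) :
    ‖f (t * u) - f (s * u)‖ ≤ M / β * ((1 - s) ^ β - (1 - t) ^ β) := by
  have hnorm : ∀ τ ∈ Icc s t, ‖(τ : ℂ) * u‖ = τ := fun τ hτ => by
    rw [norm_mul, hu, mul_one, Complex.norm_real, Real.norm_eq_abs, abs_of_nonneg (hs.trans hτ.1)]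
  have hmem : ∀ τ ∈ Icc s t, (τ : ℂ) * u ∈ ball (0 : ℂ) 1 := fun τ hτ => by
    rw [mem_ball_zero_iff, hnorm τ hτ]
    exact hτ.2.trans_lt ht
  have hg : ∀ τ ∈ Icc s t, HasDerivAt (fun τ : ℝ => f (τ * u) - f (s * u))
      (deriv f (τ * u) * u) τ := fun τ hτ =>
    (((hf.differentiableAt (isOpen_ball.mem_nhds (hmem τ hτ))).hasDerivAt.comp (τ : ℂ)
      (hasDerivAt_mul_const u)).comp_ofReal).sub_const _
  have hB : ∀ τ ∈ Icc s t, HasDerivAt (fun τ : ℝ => M / β * ((1 - s) ^ β - (1 - τ) ^ β))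
      (M * (1 - τ) ^ (β - 1)) τ := fun τ hτ => by
    have h := (((hasDerivAt_id' τ).const_sub 1).rpow_const (p := β)
      (Or.inl (by linarith [hτ.2]))).const_sub ((1 - s) ^ β) |>.const_mul (M / β)
    exact h.congr_deriv (by field_simp)
  have key := image_norm_le_of_norm_deriv_right_le_deriv_boundary'
    (fun τ hτ => (hg τ hτ).continuousAt.continuousWithinAt) (fun τ hτ =>
      (hg τ (Ico_subset_Icc_self hτ)).hasDerivWithinAt) (by simp)
    (fun τ hτ => (hB τ hτ).continuousAt.continuousWithinAt)
    (fun τ hτ => (hB τ (Ico_subset_Icc_self hτ)).hasDerivWithinAt) (fun τ hτ => by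
      rw [norm_mul, hu, mul_one]
      have h := hM _ (hmem τ (Ico_subset_Icc_self hτ))
      rwa [hnorm τ (Ico_subset_Icc_self hτ)] at h)
  exact key (right_mem_Icc.2 hst)

lemma exists_norm_le_and_norm_sub_le_of_norm_deriv_le (hf : DifferentiableOn ℂ f (ball 0 1))
    (hM : ∀ z ∈ ball (0 : ℂ) 1, ‖deriv f z‖ ≤ M * (1 - ‖z‖) ^ (β - 1)) (hβ : 0 < β)
    (hM0 : 0 ≤ M) {r : ℝ} (hr0 : 0 ≤ r) (hr1 : r ≤ 1) {v : ℂ} (hv : ‖v‖ < 1) :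
    ∃ v' : ℂ, ‖v'‖ ≤ r ∧ ‖v - v'‖ ≤ 1 - r ∧ ‖f v - f v'‖ ≤ M / β * (1 - r) ^ β := by
  rcases le_or_gt ‖v‖ r with hvr | hrv
  · exact ⟨v, hvr, by simpa using hr1, by simp; positivity⟩
  have hv0 : 0 < ‖v‖ := hr0.trans_lt hrv
  set u : ℂ := ((‖v‖⁻¹ : ℝ) : ℂ) * v
  have hu : ‖u‖ = 1 := by
    rw [norm_mul, Complex.norm_real, norm_inv, norm_norm, inv_mul_cancel₀ hv0.ne']
  have hvu : v = ‖v‖ * u := by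
    rw [← mul_assoc, ← Complex.ofReal_mul, mul_inv_cancel₀ hv0.ne', Complex.ofReal_one, one_mul]
  refine ⟨r * u, ?_, ?_, ?_⟩
  · rw [norm_mul, hu, mul_one, Complex.norm_real, Real.norm_eq_abs, abs_of_nonneg hr0]
  · conv_lhs => rw [hvu]
    rw [← sub_mul, ← Complex.ofReal_sub, norm_mul, hu, mul_one, Complex.norm_real,
      Real.norm_eq_abs, abs_of_pos (sub_pos.2 hrv)]
    linarith
  · conv_lhs => rw [hvu]
    refine (norm_sub_le_of_norm_deriv_le_radial hf hM hβ hu hr0 hrv.le hv).trans ?_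
    have : 0 ≤ (1 - ‖v‖) ^ β := Real.rpow_nonneg (by linarith) β
    have : 0 ≤ M / β := div_nonneg hM0 hβ.le
    nlinarith

lemma norm_sub_le_of_norm_deriv_le_of_norm_le (hf : DifferentiableOn ℂ f (ball 0 1))
    (hM : ∀ z ∈ ball (0 : ℂ) 1, ‖deriv f z‖ ≤ M * (1 - ‖z‖) ^ (β - 1)) (hβ : β ≤ 1)
    (hM0 : 0 ≤ M) {δ : ℝ} (hδ : 0 < δ) {z w : ℂ} (hz : ‖z‖ ≤ 1 - δ) (hw : ‖w‖ ≤ 1 - δ) :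
    ‖f z - f w‖ ≤ M * δ ^ (β - 1) * ‖z - w‖ := by
  have hsub : closedBall (0 : ℂ) (1 - δ) ⊆ ball 0 1 := closedBall_subset_ball (by linarith)
  refine (convex_closedBall (0 : ℂ) (1 - δ)).norm_image_sub_le_of_norm_deriv_le
    (fun x hx => hf.differentiableAt (isOpen_ball.mem_nhds (hsub hx))) (fun x hx => ?_)
    (mem_closedBall_zero_iff.2 hw) (mem_closedBall_zero_iff.2 hz)
  refine (hM x (hsub hx)).trans (mul_le_mul_of_nonneg_left ?_ hM0)
  exact Real.rpow_le_rpow_of_nonpos hδ (by linarith [mem_closedBall_zero_iff.1 hx])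
    (by linarith)

/-- Hardy–Littlewood: move both points radially inwards to the disc of radius `1 - ‖z - w‖`,
where `f` is Lipschitz with constant `M ‖z - w‖ ^ (β - 1)`. -/
lemma norm_sub_le_mul_rpow_on_ball_of_norm_deriv_le (hf : DifferentiableOn ℂ f (ball 0 1))
    (hM : ∀ z ∈ ball (0 : ℂ) 1, ‖deriv f z‖ ≤ M * (1 - ‖z‖) ^ (β - 1)) (hβ0 : 0 < β)
    (hβ1 : β ≤ 1) : ∀ z ∈ ball (0 : ℂ) 1, ∀ w ∈ ball (0 : ℂ) 1,
      ‖f z - f w‖ ≤ M * (2 / β + 3) * ‖z - w‖ ^ β := by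
  have hM0 : 0 ≤ M := by simpa using (norm_nonneg _).trans (hM 0 (mem_ball_self one_pos))
  intro z hz w hw
  rw [mem_ball_zero_iff] at hz hw
  rcases eq_or_ne z w with rfl | hzw
  · simp [Real.zero_rpow hβ0.ne']
  set δ := ‖z - w‖
  have hδ : 0 < δ := norm_pos_iff.2 (sub_ne_zero.2 hzw)
  have htri : ∀ z' w' : ℂ, ‖f z - f w‖ ≤ ‖f z - f z'‖ + ‖f z' - f w'‖ + ‖f w - f w'‖ :=
    fun z' w' => by
      have := dist_triangle4 (f z) (f z') (f w') (f w)
      rwa [dist_comm (f w'), dist_eq_norm, dist_eq_norm, dist_eq_norm, dist_eq_norm] at this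
  rcases lt_or_ge δ 1 with hδ1 | hδ1
  · obtain ⟨z', hz', hzz', hfz⟩ := exists_norm_le_and_norm_sub_le_of_norm_deriv_le hf hM hβ0 hM0
      (r := 1 - δ) (by linarith) (by linarith) hz
    obtain ⟨w', hw', hww', hfw⟩ := exists_norm_le_and_norm_sub_le_of_norm_deriv_le hf hM hβ0 hM0
      (r := 1 - δ) (by linarith) (by linarith) hw
    rw [sub_sub_cancel] at hzz' hww' hfz hfw
    have hz'w' : ‖z' - w'‖ ≤ 3 * δ := by
      have := dist_triangle4 z' z w w'
      rw [dist_eq_norm, dist_eq_norm, dist_eq_norm, dist_eq_norm, norm_sub_rev z' z] at this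
      linarith
    have hmid := norm_sub_le_of_norm_deriv_le_of_norm_le hf hM hβ1 hM0 hδ hz' hw'
    have hpow : δ ^ (β - 1) * δ = δ ^ β := by
      rw [Real.rpow_sub_one hδ.ne', div_mul_cancel₀ _ hδ.ne']
    calc ‖f z - f w‖ ≤ M / β * δ ^ β + M * δ ^ (β - 1) * (3 * δ) + M / β * δ ^ β :=
          (htri z' w').trans (add_le_add_three hfz (hmid.trans (by gcongr)) hfw)
      _ = M * (2 / β + 3) * δ ^ β := by rw [← hpow]; ring
  · obtain ⟨z', hz', -, hfz⟩ := exists_norm_le_and_norm_sub_le_of_norm_deriv_le hf hM hβ0 hM0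
      le_rfl zero_le_one hz
    obtain ⟨w', hw', -, hfw⟩ := exists_norm_le_and_norm_sub_le_of_norm_deriv_le hf hM hβ0 hM0
      le_rfl zero_le_one hw
    rw [norm_le_zero_iff] at hz' hw'
    subst hz' hw'
    have hδβ : 1 ≤ δ ^ β := Real.one_le_rpow hδ1 hβ0.le
    calc ‖f z - f w‖ ≤ M / β * (1 - 0) ^ β + ‖f 0 - f 0‖ + M / β * (1 - 0) ^ β :=
          (htri 0 0).trans (by gcongr)
      _ = M * (2 / β) := by simp only [sub_zero, Real.one_rpow, sub_self, norm_zero]; ring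
      _ ≤ M * (2 / β + 3) * 1 := by rw [mul_one]; gcongr; linarith
      _ ≤ M * (2 / β + 3) * δ ^ β := by gcongr

lemma norm_sub_le_mul_rpow_on_closure {E F : Type*} [SeminormedAddCommGroup E]
    [SeminormedAddCommGroup F] {f : E → F} {s : Set E} {C β : ℝ} (hβ : 0 ≤ β)
    (hf : ContinuousOn f (closure s)) (h : ∀ z ∈ s, ∀ w ∈ s, ‖f z - f w‖ ≤ C * ‖z - w‖ ^ β) :
    ∀ z ∈ closure s, ∀ w ∈ closure s, ‖f z - f w‖ ≤ C * ‖z - w‖ ^ β := by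
  intro z hz w hw
  have hcont : ContinuousOn (fun p : E × E => f p.1 - f p.2) (closure (s ×ˢ s)) := by
    rw [closure_prod_eq]
    exact (hf.comp continuousOn_fst fun p hp => hp.1).sub
      (hf.comp continuousOn_snd fun p hp => hp.2)
  exact le_on_closure (f := fun p : E × E => ‖f p.1 - f p.2‖)
    (g := fun p : E × E => C * ‖p.1 - p.2‖ ^ β) (fun p hp => h _ hp.1 _ hp.2) hcont.norm
    (continuousOn_const.mul ((continuous_fst.sub continuous_snd).norm.continuousOn.rpow_const
      fun _ _ => Or.inr hβ))
    (show (z, w) ∈ closure (s ×ˢ s) by rw [closure_prod_eq]; exact ⟨hz, hw⟩)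

lemma norm_sub_le_mul_rpow_on_closedBall_of_norm_deriv_le (hf : DiffContOnCl ℂ f (ball 0 1))
    (hM : ∀ z ∈ ball (0 : ℂ) 1, ‖deriv f z‖ ≤ M * (1 - ‖z‖) ^ (β - 1)) (hβ0 : 0 < β)
    (hβ1 : β ≤ 1) : ∀ z ∈ closedBall (0 : ℂ) 1, ∀ w ∈ closedBall (0 : ℂ) 1,
      ‖f z - f w‖ ≤ M * (2 / β + 3) * ‖z - w‖ ^ β := by
  rw [← closure_ball (0 : ℂ) one_ne_zero]
  exact norm_sub_le_mul_rpow_on_closure hβ0.le hf.2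
    (norm_sub_le_mul_rpow_on_ball_of_norm_deriv_le hf.1 hM hβ0 hβ1)

end HardyLittlewood

lemma bnormSq_nonneg (g : ℂ → ℂ) : 0 ≤ bnormSq g :=
  intervalIntegral.integral_nonneg Real.two_pi_pos.le fun _ _ => by positivity

section Campanato

open Real

variable {f : ℂ → ℂ} {a : ℂ}

/-- Cauchy's estimate for `f ∘ σ_a` at `0`, where its derivative is `(‖a‖² - 1) f'(a)`,
followed by `x ≤ ε / 2 + x² / (2ε)`. -/
lemma one_sub_norm_sq_mul_norm_deriv_le (hf : DiffContOnCl ℂ f (ball 0 1)) (ha : a ∈ ball (0 : ℂ) 1)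
    {ε : ℝ} (hε : 0 < ε) :
    (1 - ‖a‖ ^ 2) * ‖deriv f a‖ ≤
      ε / 2 + (4 * π * ε)⁻¹ * bnormSq (fun ξ => f (mSigma a ξ) - f a) := by
  rw [mem_ball_zero_iff] at ha
  have hg := hf.comp_mSigma ha
  have hderiv : deriv (f ∘ mSigma a) 0 = deriv f a * ((‖a‖ ^ 2 - 1 : ℝ) : ℂ) := by
    have hfa : HasDerivAt f (deriv f a) (mSigma a 0) := by
      rw [mSigma_zero]
      exact (hf.differentiableAt isOpen_ball (mem_ball_zero_iff.2 ha)).hasDerivAt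
    exact (hfa.comp 0 (hasDerivAt_mSigma_zero a)).deriv
  have hcauchy := norm_deriv_le_integral_norm_sub_circleMap one_pos hg
  rw [hderiv, norm_mul, norm_ofReal_norm_sq_sub_one ha, mul_comm, mul_one] at hcauchy
  have hcont : Continuous fun θ : ℝ => (f ∘ mSigma a) (circleMap 0 1 θ) - (f ∘ mSigma a) 0 :=
    (hg.continuousOn_ball.comp_continuous (continuous_circleMap 0 1)
      fun θ => circleMap_mem_closedBall 0 zero_le_one θ).sub continuous_const
  have hamgm := intervalIntegral.integral_norm_le_mul_add_integral_norm_sq hcont two_pi_pos.le hε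
  have hbnorm : ∫ θ in 0..2 * π, ‖(f ∘ mSigma a) (circleMap 0 1 θ) - (f ∘ mSigma a) 0‖ ^ 2 =
      bnormSq (fun ξ => f (mSigma a ξ) - f a) := by
    simp [bnormSq, circleMap_zero]
  rw [hbnorm] at hamgm
  calc (1 - ‖a‖ ^ 2) * ‖deriv f a‖
      ≤ (2 * π)⁻¹ * ((2 * π - 0) * ε / 2 + (2 * ε)⁻¹ * bnormSq (fun ξ => f (mSigma a ξ) - f a)) :=
        hcauchy.trans (by gcongr)
    _ = ε / 2 + (4 * π * ε)⁻¹ * bnormSq (fun ξ => f (mSigma a ξ) - f a) := by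
        field_simp; ring

lemma bnormSq_comp_mSigma_sub_le (ha : a ∈ ball (0 : ℂ) 1) {C β : ℝ}
    (hC : ∀ z ∈ closedBall (0 : ℂ) 1, ∀ w ∈ closedBall (0 : ℂ) 1, ‖f z - f w‖ ≤ C * ‖z - w‖ ^ β) :
    bnormSq (fun ξ => f (mSigma a ξ) - f a) ≤ C ^ 2 * (1 - ‖a‖ ^ 2) ^ (2 * β) *
      ∫ θ in 0..2 * π, ‖1 - conj a * Complex.exp (θ * Complex.I)‖ ^ (-(2 * β)) := by
  rw [mem_ball_zero_iff] at ha
  have ht : 0 ≤ 1 - ‖a‖ ^ 2 := by nlinarith [norm_nonneg a]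
  have hne : ∀ θ : ℝ, 1 - conj a * Complex.exp (θ * Complex.I) ≠ 0 := fun θ =>
    one_sub_conj_mul_ne_zero ha (Complex.norm_exp_ofReal_mul_I θ).le
  have hmaj : Continuous fun θ : ℝ => C ^ 2 * (1 - ‖a‖ ^ 2) ^ (2 * β) *
      ‖1 - conj a * Complex.exp (θ * Complex.I)‖ ^ (-(2 * β)) :=
    continuous_const.mul ((continuous_const.sub (continuous_const.mul (by fun_prop))).norm
      |>.rpow_const fun θ => Or.inl (norm_ne_zero_iff.2 (hne θ)))
  rw [bnormSq, ← intervalIntegral.integral_const_mul,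
    intervalIntegral.integral_of_le two_pi_pos.le, intervalIntegral.integral_of_le two_pi_pos.le]
  refine integral_mono_of_nonneg (ae_of_all _ fun _ => by positivity)
    (hmaj.integrableOn_Icc.mono_set Ioc_subset_Icc_self) (ae_of_all _ fun θ => ?_)
  have hξ := Complex.norm_exp_ofReal_mul_I θ
  have hσ : mSigma a (Complex.exp (θ * Complex.I)) ∈ closedBall (0 : ℂ) 1 :=
    mem_closedBall_zero_iff.2 (norm_mSigma_le_one ha hξ.le)
  calc ‖f (mSigma a (Complex.exp (θ * Complex.I))) - f a‖ ^ 2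
      ≤ (C * ‖mSigma a (Complex.exp (θ * Complex.I)) - a‖ ^ β) ^ 2 :=
        pow_le_pow_left₀ (norm_nonneg _) (hC _ hσ _ (mem_closedBall_zero_iff.2 ha.le)) 2
    _ = C ^ 2 * (1 - ‖a‖ ^ 2) ^ (2 * β) *
          ‖1 - conj a * Complex.exp (θ * Complex.I)‖ ^ (-(2 * β)) := by
        have hd := norm_nonneg (1 - conj a * Complex.exp (θ * Complex.I))
        rw [norm_mSigma_sub_self ha hξ, mul_pow, ← rpow_mul_natCast (div_nonneg ht hd),
          div_rpow ht hd, div_eq_mul_inv, ← rpow_neg hd]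
        push_cast
        ring_nf

theorem lipschitz_of_campanato {p : ℝ} (hf : DiffContOnCl ℂ f (ball 0 1))
    (h : ∃ M : ℝ, ∀ a ∈ ball (0 : ℂ) 1,
      (1 - ‖a‖ ^ 2) ^ ((1 - p) / 2) * √(bnormSq fun ξ => f (mSigma a ξ) - f a) ≤ M) :
    ∃ M : ℝ, ∀ a ∈ ball (0 : ℂ) 1, (1 - ‖a‖ ^ 2) ^ ((3 - p) / 2) * ‖deriv f a‖ ≤ M := by
  obtain ⟨M, hM⟩ := h
  refine ⟨1 / 2 + M ^ 2 / (4 * π), fun a ha => ?_⟩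
  have ht : 0 < 1 - ‖a‖ ^ 2 := by nlinarith [norm_nonneg a, mem_ball_zero_iff.1 ha]
  set ε := (1 - ‖a‖ ^ 2) ^ ((p - 1) / 2)
  have hε : 0 < ε := rpow_pos_of_pos ht _
  have hQ : bnormSq (fun ξ => f (mSigma a ξ) - f a) ≤ (ε * M) ^ 2 := by
    have h := hM a ha
    rw [show (1 - p) / 2 = -((p - 1) / 2) by ring, rpow_neg ht.le, inv_mul_le_iff₀ hε] at h
    rw [← sq_sqrt (bnormSq_nonneg _)]
    exact pow_le_pow_left₀ (sqrt_nonneg _) h 2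
  rw [show (3 - p) / 2 = 1 - (p - 1) / 2 by ring, rpow_sub ht, rpow_one]
  calc (1 - ‖a‖ ^ 2) / ε * ‖deriv f a‖ = ε⁻¹ * ((1 - ‖a‖ ^ 2) * ‖deriv f a‖) := by ring
    _ ≤ ε⁻¹ * (ε / 2 + (4 * π * ε)⁻¹ * (ε * M) ^ 2) := by
        gcongr
        exact (one_sub_norm_sq_mul_norm_deriv_le hf ha hε).trans (by gcongr)
    _ = 1 / 2 + M ^ 2 / (4 * π) := by field_simp

theorem campanato_of_lipschitz {p : ℝ} (hp : p ∈ Ioo 1 2) (hf : DiffContOnCl ℂ f (ball 0 1))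
    (h : ∃ M : ℝ, ∀ a ∈ ball (0 : ℂ) 1, (1 - ‖a‖ ^ 2) ^ ((3 - p) / 2) * ‖deriv f a‖ ≤ M) :
    ∃ M : ℝ, ∀ a ∈ ball (0 : ℂ) 1,
      (1 - ‖a‖ ^ 2) ^ ((1 - p) / 2) * √(bnormSq fun ξ => f (mSigma a ξ) - f a) ≤ M := by
  obtain ⟨hp1, hp2⟩ := hp
  obtain ⟨M, hM⟩ := h
  set β := (p - 1) / 2 with hβ
  have hβ0 : 0 < β := by linarith
  have hβ1 : 2 * β < 1 := by linarith
  have hgrowth : ∀ z ∈ ball (0 : ℂ) 1, ‖deriv f z‖ ≤ M * (1 - ‖z‖) ^ (β - 1) := by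
    intro z hz
    have hz1 := mem_ball_zero_iff.1 hz
    have h1 : 0 < 1 - ‖z‖ := by linarith
    have hle : (1 - ‖z‖) ^ ((3 - p) / 2) ≤ (1 - ‖z‖ ^ 2) ^ ((3 - p) / 2) :=
      rpow_le_rpow h1.le (by nlinarith [norm_nonneg z]) (by linarith)
    rw [show β - 1 = -((3 - p) / 2) by ring, rpow_neg h1.le, ← div_eq_mul_inv,
      le_div_iff₀ (rpow_pos_of_pos h1 _)]
    nlinarith [hM z hz, norm_nonneg (deriv f z)]
  have hholder := norm_sub_le_mul_rpow_on_closedBall_of_norm_deriv_le hf hgrowth hβ0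
    (by linarith)
  set C := M * (2 / β + 3)
  set K := π ^ (2 * β) * ∫ θ in -π..π, |θ| ^ (-(2 * β))
  have hK : 0 ≤ K := mul_nonneg (by positivity)
    (intervalIntegral.integral_nonneg (by linarith [pi_pos]) fun _ _ => by positivity)
  refine ⟨|C| * √K, fun a ha => ?_⟩
  have ha1 := mem_ball_zero_iff.1 ha
  have ht : 0 < 1 - ‖a‖ ^ 2 := by nlinarith [norm_nonneg a]
  have hQ : bnormSq (fun ξ => f (mSigma a ξ) - f a) ≤ ((1 - ‖a‖ ^ 2) ^ β * (|C| * √K)) ^ 2 := by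
    refine (bnormSq_comp_mSigma_sub_le ha hholder).trans ?_
    calc C ^ 2 * (1 - ‖a‖ ^ 2) ^ (2 * β) *
          ∫ θ in 0..2 * π, ‖1 - conj a * Complex.exp (θ * Complex.I)‖ ^ (-(2 * β))
        ≤ C ^ 2 * (1 - ‖a‖ ^ 2) ^ (2 * β) * K := by
          gcongr
          exact integral_norm_one_sub_mul_exp_rpow_le (by linarith) hβ1
            (by rwa [RCLike.norm_conj])
      _ = ((1 - ‖a‖ ^ 2) ^ β * (|C| * √K)) ^ 2 := by
          rw [mul_pow _ (|C| * √K), mul_pow |C|, sq_abs, sq_sqrt hK, ← rpow_mul_natCast ht.le]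
          push_cast
          ring_nf
  rw [show (1 - p) / 2 = -β by ring, rpow_neg ht.le, inv_mul_le_iff₀ (rpow_pos_of_pos ht _)]
  rw [← sqrt_sq (by positivity : 0 ≤ (1 - ‖a‖ ^ 2) ^ β * (|C| * √K))]
  exact sqrt_le_sqrt hQ

end Campanato

/-- For `p ∈ (1,2)`, an analytic `f` belongs to the Campanato space `CA_p`, i.e.
`sup_{a∈D} (1-|a|²)^{(1-p)/2} ‖f∘σ_a − f(a)‖₂ < ∞`, if and only if
`sup_{a∈D} (1-|a|²)^{(3-p)/2} |f'(a)| < ∞` (i.e. `f` lies in the Lipschitz space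
`A_{(p-1)/2}`). -/
theorem campanato_iff_lipschitz (p : ℝ) (hp : p ∈ Set.Ioo (1:ℝ) 2) (f : ℂ → ℂ)
    (hf : DifferentiableOn ℂ f (Metric.ball (0:ℂ) 1))
    (hfc : ContinuousOn f (Metric.closedBall (0:ℂ) 1)) :
    (∃ M : ℝ, ∀ a ∈ Metric.ball (0:ℂ) 1,
        (1 - ‖a‖ ^ 2) ^ ((1 - p) / 2) *
          Real.sqrt (bnormSq fun ξ => f (mSigma a ξ) - f a) ≤ M) ↔
    (∃ M : ℝ, ∀ a ∈ Metric.ball (0:ℂ) 1,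
        (1 - ‖a‖ ^ 2) ^ ((3 - p) / 2) * ‖deriv f a‖ ≤ M) := by
  have hf' : DiffContOnCl ℂ f (ball 0 1) := ⟨hf, by rwa [closure_ball 0 one_ne_zero]⟩
  exact ⟨lipschitz_of_campanato hf', campanato_of_lipschitz hp hf'⟩
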